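/- arXiv:2204.11080 — 4 statements merged into one kernel-verified Lean document; each statement's English description precedes it below -/
import Mathlib

section
/- For a zigzag filtration starting and ending with the empty complex, each index i with 0 ≤ i < m appears as the birth-minus-one or death of intervals in a constrained way: the single inclusion K_i ↔ K_{i+1} either provides i+1 as a birth index of exactly one interval in the barcode, or provides i as a death index of exactly one interval, but not both. -/
open Module

/-- A universe of cells with a dimension function and a `ℤ/2` boundary operator
satisfying `∂∘∂ = 0`, from which Δ-complexes are carved out as finite closed subsets. -/
structure CellStruct (C : Type) [DecidableEq C] where
  dim : C → ℕ
  bd : C → (C →₀ ZMod 2)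
  dim_bd : ∀ c b, b ∈ (bd c).support → dim b + 1 = dim c
  bd_bd : ∀ c, Finsupp.linearCombination (ZMod 2) bd (bd c) = 0

namespace CellStruct

variable {C : Type} [DecidableEq C] (S : CellStruct C)

/-- The boundary operator on `ℤ/2`-chains. -/
noncomputable def D : (C →₀ ZMod 2) →ₗ[ZMod 2] (C →₀ ZMod 2) :=
  Finsupp.linearCombination (ZMod 2) S.bd

/-- A finite set of cells is a complex if it is closed under taking boundary cells. -/
def IsComplex (K : Finset C) : Prop := ∀ c ∈ K, ((S.bd c).support : Set C) ⊆ (K : Set C)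

/-- `p`-chains supported on `K`. -/
noncomputable def chains (p : ℕ) (K : Finset C) : Submodule (ZMod 2) (C →₀ ZMod 2) :=
  Submodule.span (ZMod 2) {x | ∃ c ∈ K, S.dim c = p ∧ x = Finsupp.single c 1}

/-- `p`-cycles of `K`. -/
noncomputable def cycles (p : ℕ) (K : Finset C) : Submodule (ZMod 2) (C →₀ ZMod 2) :=
  S.chains p K ⊓ LinearMap.ker S.D

/-- `p`-boundaries of `K`. -/
noncomputable def bdries (p : ℕ) (K : Finset C) : Submodule (ZMod 2) (C →₀ ZMod 2) :=
  Submodule.map S.D (S.chains (p+1) K)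

/-- The `p`-th Betti number of `K` over `ℤ/2`. -/
noncomputable def betti (p : ℕ) (K : Finset C) : ℕ :=
  finrank (ZMod 2) (S.cycles p K) - finrank (ZMod 2) (S.bdries p K)

lemma chains_mono (p : ℕ) {K K' : Finset C} (h : K ⊆ K') : S.chains p K ≤ S.chains p K' := by
  apply Submodule.span_mono
  rintro x ⟨c, hc, hd, rfl⟩
  exact ⟨c, h hc, hd, rfl⟩

lemma cycles_mono (p : ℕ) {K K' : Finset C} (h : K ⊆ K') : S.cycles p K ≤ S.cycles p K' :=
  inf_le_inf_right _ (S.chains_mono p h)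

lemma bdries_mono (p : ℕ) {K K' : Finset C} (h : K ⊆ K') : S.bdries p K ≤ S.bdries p K' :=
  Submodule.map_mono (S.chains_mono _ h)

/-- The `p`-th homology of `K` over `ℤ/2`, as cycles modulo boundaries. -/
noncomputable def Hmod (p : ℕ) (K : Finset C) :=
  S.cycles p K ⧸ ((S.bdries p K).comap (S.cycles p K).subtype : Submodule (ZMod 2) (S.cycles p K))

noncomputable instance (p : ℕ) (K : Finset C) : AddCommGroup (S.Hmod p K) := by
  unfold Hmod; infer_instance

noncomputable instance (p : ℕ) (K : Finset C) : Module (ZMod 2) (S.Hmod p K) := by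
  unfold Hmod; infer_instance

/-- The map on homology induced by an inclusion of complexes. -/
noncomputable def indMap (p : ℕ) {K K' : Finset C} (h : K ⊆ K') :
    S.Hmod p K →ₗ[ZMod 2] S.Hmod p K' :=
  Submodule.mapQ _ _ (Submodule.inclusion (S.cycles_mono p h)) (by
    intro x hx
    simp only [Submodule.mem_comap, Submodule.subtype_apply, Submodule.coe_inclusion] at hx ⊢
    exact S.bdries_mono p h hx)

end CellStruct
/-- A zigzag module (An-quiver representation) of length `m` over a field `k`,
with arrow directions given by `dir` (`true` = forward). -/
structure ZigzagMod (k : Type) [Field k] (m : ℕ) (dir : ℕ → Bool) where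
  V : ℕ → Type
  [grp : ∀ i, AddCommGroup (V i)]
  [mod : ∀ i, Module k (V i)]
  fwd : ∀ i, i < m → dir i = true → (V i →ₗ[k] V (i+1))
  bwd : ∀ i, i < m → dir i = false → (V (i+1) →ₗ[k] V i)

attribute [instance] ZigzagMod.grp ZigzagMod.mod

namespace ZigzagMod

variable {k : Type} [Field k] {m : ℕ} {dir : ℕ → Bool}

/-- `M` is an interval module over `[b,d] ⊆ [0,m]`. -/
def IsInterval (M : ZigzagMod k m dir) (b d : ℕ) : Prop :=
  b ≤ d ∧ d ≤ m ∧
  (∀ i, i ≤ m → b ≤ i → i ≤ d → Module.finrank k (M.V i) = 1) ∧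
  (∀ i, i ≤ m → ¬(b ≤ i ∧ i ≤ d) → Module.finrank k (M.V i) = 0) ∧
  (∀ i (hi : i < m) (h : dir i = true), b ≤ i → i + 1 ≤ d → Function.Bijective (M.fwd i hi h)) ∧
  (∀ i (hi : i < m) (h : dir i = false), b ≤ i → i + 1 ≤ d → Function.Bijective (M.bwd i hi h))

/-- Direct sum (here: product, over a finite index type) of a family of zigzag modules. -/
def piSum {ι : Type} (Ms : ι → ZigzagMod k m dir) : ZigzagMod k m dir where
  V i := ∀ l, (Ms l).V i
  fwd i hi h := LinearMap.pi fun l => ((Ms l).fwd i hi h).comp (LinearMap.proj l)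
  bwd i hi h := LinearMap.pi fun l => ((Ms l).bwd i hi h).comp (LinearMap.proj l)

/-- An isomorphism of zigzag modules (on the relevant index range `[0,m]`). -/
structure Iso (M N : ZigzagMod k m dir) where
  e : ∀ i, i ≤ m → (M.V i ≃ₗ[k] N.V i)
  comm_fwd : ∀ i (hi : i < m) (h : dir i = true) x,
    e (i+1) hi (M.fwd i hi h x) = N.fwd i hi h (e i (le_of_lt hi) x)
  comm_bwd : ∀ i (hi : i < m) (h : dir i = false) x,
    e i (le_of_lt hi) (M.bwd i hi h x) = N.bwd i hi h (e (i+1) hi x)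

/-- `B` is a barcode of `M`: a multiset of intervals such that `M` is isomorphic to the
direct sum of the corresponding interval modules. -/
def IsBarcode (M : ZigzagMod k m dir) (B : Multiset (ℕ × ℕ)) : Prop :=
  ∃ (ι : Type) (_ : Fintype ι) (Ms : ι → ZigzagMod k m dir) (bd : ι → ℕ × ℕ),
    (∀ l, (Ms l).IsInterval (bd l).1 (bd l).2) ∧
    Nonempty (M.Iso (piSum Ms)) ∧ B = Multiset.map bd Finset.univ.val

end ZigzagMod
/-- A cell-wise zigzag filtration of Δ-complexes of length `m`: at each step `i < m` the
event `ev i` either inserts (`true`) or deletes (`false`) a single cell, starting and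
ending with the empty complex. -/
structure Filt (C : Type) [DecidableEq C] (S : CellStruct C) (m : ℕ) where
  K : ℕ → Finset C
  ev : ℕ → Bool × C
  K_zero : K 0 = ∅
  K_last : K m = ∅
  step : ∀ i, i < m →
    ((ev i).1 = true ∧ (ev i).2 ∉ K i ∧ K (i+1) = insert (ev i).2 (K i)) ∨
    ((ev i).1 = false ∧ (ev i).2 ∉ K (i+1) ∧ K i = insert (ev i).2 (K (i+1)))
  complex : ∀ i, S.IsComplex (K i)

namespace Filt

variable {C : Type} [DecidableEq C] {S : CellStruct C} {m : ℕ}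

/-- Directions of the filtration arrows. -/
def dir (F : Filt C S m) : ℕ → Bool := fun i => (F.ev i).1

lemma subset_of_fwd (F : Filt C S m) {i : ℕ} (hi : i < m) (h : F.dir i = true) :
    F.K i ⊆ F.K (i+1) := by
  rcases F.step i hi with ⟨_, _, he⟩ | ⟨hb, _, _⟩
  · rw [he]; exact Finset.subset_insert _ _
  · exact absurd h (by simp [dir, hb])

lemma subset_of_bwd (F : Filt C S m) {i : ℕ} (hi : i < m) (h : F.dir i = false) :
    F.K (i+1) ⊆ F.K i := by
  rcases F.step i hi with ⟨hb, _, _⟩ | ⟨_, _, he⟩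
  · exact absurd h (by simp [dir, hb])
  · rw [he]; exact Finset.subset_insert _ _

/-- The `p`-th zigzag homology module of a filtration. -/
noncomputable def Hzz (F : Filt C S m) (p : ℕ) : ZigzagMod (ZMod 2) m F.dir where
  V i := S.Hmod p (F.K i)
  fwd i hi h := S.indMap p (F.subset_of_fwd hi h)
  bwd i hi h := S.indMap p (F.subset_of_bwd hi h)

/-- A barcode family for a filtration: `Bp p` is a barcode of the `p`-th zigzag homology. -/
def IsBarcodeFam (F : Filt C S m) (Bp : ℕ → Multiset (ℕ × ℕ)) : Prop :=
  ∀ p, (F.Hzz p).IsBarcode (Bp p)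

/-- The filtration is non-repetitive: once a cell is deleted it is never added again. -/
def NonRep (F : Filt C S m) : Prop :=
  ∀ i j σ, i < m → j < m → i ≤ j → F.ev i = (false, σ) → F.ev j ≠ (true, σ)

end Filt
namespace CellStruct

variable {C : Type} [DecidableEq C] (S : CellStruct C)

lemma chains_eq_supported (p : ℕ) (K : Finset C) :
    S.chains p K = Finsupp.supported (ZMod 2) (ZMod 2) {c | c ∈ K ∧ S.dim c = p} := by
  rw [chains, Finsupp.supported_eq_span_single]
  congr 1
  ext x
  constructor
  · rintro ⟨c, hc, hd, rfl⟩; exact ⟨c, ⟨hc, hd⟩, rfl⟩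
  · rintro ⟨c, ⟨hc, hd⟩, rfl⟩; exact ⟨c, hc, hd, rfl⟩

lemma mem_chains {p : ℕ} {K : Finset C} {x : C →₀ ZMod 2} :
    x ∈ S.chains p K ↔ ∀ c ∈ x.support, c ∈ K ∧ S.dim c = p := by
  rw [chains_eq_supported, Finsupp.mem_supported]
  constructor
  · intro h c hc; exact h hc
  · intro h c hc; exact h c hc

lemma D_single (c : C) (a : ZMod 2) : S.D (Finsupp.single c a) = a • S.bd c := by
  simp [D, Finsupp.linearCombination_single]

lemma D_D (x : C →₀ ZMod 2) : S.D (S.D x) = 0 := by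
  induction x using Finsupp.induction_linear with
  | zero => simp
  | add a b ha hb => simp [ha, hb]
  | single c a => simp [D_single, Finsupp.smul_single, D, bd_bd]

lemma two_nsmul_zero (w : C →₀ ZMod 2) : w + w = 0 := by
  have : (2 : ZMod 2) • w = w + w := two_smul _ w
  rw [show (2 : ZMod 2) = 0 by decide, zero_smul] at this
  exact this.symm

lemma bdries_le_cycles (p : ℕ) (K : Finset C) (hK : S.IsComplex K) :
    S.bdries p K ≤ S.cycles p K := by
  rw [bdries, chains, Submodule.map_span, Submodule.span_le]
  rintro y ⟨x, ⟨c, hc, hd, rfl⟩, rfl⟩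
  have hbd : S.D (Finsupp.single c 1) = S.bd c := by simp [D_single]
  rw [SetLike.mem_coe, hbd, cycles, Submodule.mem_inf]
  constructor
  · rw [mem_chains]
    intro b hb
    exact ⟨hK c hc hb, by have := S.dim_bd c b hb; omega⟩
  · simp only [LinearMap.mem_ker]
    exact S.bd_bd c

instance chains_fd (p : ℕ) (K : Finset C) : FiniteDimensional (ZMod 2) (S.chains p K) := by
  rw [chains_eq_supported]
  have hfin : {c | c ∈ K ∧ S.dim c = p}.Finite :=
    (K.finite_toSet).subset (fun c hc => hc.1)
  haveI := hfin.fintype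
  exact Module.Finite.equiv (Finsupp.supportedEquivFinsupp
    (M := ZMod 2) (R := ZMod 2) {c | c ∈ K ∧ S.dim c = p}).symm

instance cycles_fd (p : ℕ) (K : Finset C) : FiniteDimensional (ZMod 2) (S.cycles p K) :=
  Submodule.finiteDimensional_of_le (inf_le_left : S.cycles p K ≤ S.chains p K)

instance bdries_fd (p : ℕ) (K : Finset C) : FiniteDimensional (ZMod 2) (S.bdries p K) :=
  Module.Finite.map _ _

end CellStruct
namespace CellStruct

variable {C : Type} [DecidableEq C] (S : CellStruct C)

instance Hmod_fd (p : ℕ) (K : Finset C) : FiniteDimensional (ZMod 2) (S.Hmod p K) := by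
  unfold Hmod
  infer_instance

lemma finrank_Hmod (p : ℕ) (K : Finset C) (hK : S.IsComplex K) :
    finrank (ZMod 2) (S.Hmod p K) + finrank (ZMod 2) (S.bdries p K)
      = finrank (ZMod 2) (S.cycles p K) := by
  have h := Submodule.finrank_quotient_add_finrank
    ((S.bdries p K).comap (S.cycles p K).subtype : Submodule (ZMod 2) (S.cycles p K))
  have he : finrank (ZMod 2)
      ((S.bdries p K).comap (S.cycles p K).subtype : Submodule (ZMod 2) (S.cycles p K))
      = finrank (ZMod 2) (S.bdries p K) :=
    LinearEquiv.finrank_eq (Submodule.comapSubtypeEquivOfLe (S.bdries_le_cycles p K hK))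
  rw [he] at h
  exact h

end CellStruct
namespace CellStruct

variable {C : Type} [DecidableEq C] {S : CellStruct C}

lemma zmod2_cases : ∀ a : ZMod 2, a = 0 ∨ a = 1 := by decide

lemma chains_insert_ne {K : Finset C} {σ : C} {p : ℕ} (hp : S.dim σ ≠ p) :
    S.chains p (insert σ K) = S.chains p K := by
  rw [chains_eq_supported, chains_eq_supported]
  congr 1
  ext c
  simp only [Set.mem_setOf_eq, Finset.mem_insert]
  constructor
  · rintro ⟨rfl | hc, hd⟩
    · exact absurd hd hp
    · exact ⟨hc, hd⟩
  · exact fun ⟨hc, hd⟩ => ⟨Or.inr hc, hd⟩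

lemma chains_insert_self {K : Finset C} {σ : C} {q : ℕ} (hd : S.dim σ = q) :
    S.chains q (insert σ K) =
      S.chains q K ⊔ Submodule.span (ZMod 2) {Finsupp.single σ (1 : ZMod 2)} := by
  subst hd
  rw [chains_eq_supported, chains_eq_supported]
  have hset : {c | c ∈ insert σ K ∧ S.dim c = S.dim σ}
      = {c | c ∈ K ∧ S.dim c = S.dim σ} ∪ {σ} := by
    ext c
    simp only [Set.mem_setOf_eq, Finset.mem_insert, Set.mem_union, Set.mem_singleton_iff]
    constructor
    · rintro ⟨rfl | hc, hd⟩
      · exact Or.inr rfl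
      · exact Or.inl ⟨hc, hd⟩
    · rintro (⟨hc, hd⟩ | rfl)
      · exact ⟨Or.inr hc, hd⟩
      · exact ⟨Or.inl rfl, rfl⟩
  rw [hset, Finsupp.supported_union]
  congr 1
  rw [Finsupp.supported_eq_span_single, Set.image_singleton]

lemma insertion {K K' : Finset C} {σ : C} (hσ : σ ∉ K) (hins : K' = insert σ K)
    (hc : S.IsComplex K) (hc' : S.IsComplex K') (hsub : K ⊆ K') :
    ∃ q0 : ℕ,
      ((∀ p, Function.Injective (S.indMap p hsub)) ∧
        ∀ p, finrank (ZMod 2) (S.Hmod p K') =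
          (if p = q0 then finrank (ZMod 2) (S.Hmod p K) + 1
            else finrank (ZMod 2) (S.Hmod p K))) ∨
      ((∀ p, Function.Surjective (S.indMap p hsub)) ∧
        ∀ p, finrank (ZMod 2) (S.Hmod p K) =
          (if p = q0 then finrank (ZMod 2) (S.Hmod p K') + 1
            else finrank (ZMod 2) (S.Hmod p K'))) := by
  subst hins
  classical
  set q := S.dim σ with hq
  set e : C →₀ ZMod 2 := Finsupp.single σ 1 with he
  set w := S.D e with hwdef
  have heσ : e σ = 1 := Finsupp.single_eq_same
  have hw : w = S.bd σ := by rw [hwdef, he, D_single, one_smul]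
  have hwsupp : ∀ b ∈ w.support, b ∈ K ∧ S.dim b + 1 = q := by
    intro b hb
    rw [hw] at hb
    have hd := S.dim_bd σ b hb
    have hbK' : b ∈ (insert σ K : Finset C) := hc' σ (Finset.mem_insert_self σ K) hb
    have hbσ : b ≠ σ := fun h => by rw [h] at hd; omega
    rcases Finset.mem_insert.mp hbK' with h | h
    · exact absurd h hbσ
    · exact ⟨h, hd⟩
  have hDw : S.D w = 0 := by rw [hwdef]; exact S.D_D e
  have hbd_ne : ∀ p, p + 1 ≠ q → S.bdries p (insert σ K) = S.bdries p K := by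
    intro p hp
    rw [bdries, bdries, chains_insert_ne (by omega)]
  have hbd_q : ∀ p, p + 1 = q → S.bdries p (insert σ K)
      = S.bdries p K ⊔ Submodule.span (ZMod 2) {w} := by
    intro p hp
    rw [bdries, bdries, hp, chains_insert_self hq.symm, Submodule.map_sup,
      Submodule.map_span, Set.image_singleton, ← he, ← hwdef]
  have he_mem' : e ∈ S.chains q (insert σ K) := by
    rw [mem_chains]
    intro b hb
    have hb' : b = σ := Finset.mem_singleton.mp (Finsupp.support_single_subset hb)
    rw [hb']
    exact ⟨Finset.mem_insert_self σ K, hq.symm⟩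
  have hσ0 : ∀ x ∈ S.chains q K, x σ = 0 := by
    intro x hx
    by_contra h
    exact hσ ((S.mem_chains.mp hx σ (Finsupp.mem_support_iff.mpr h)).1)
  have hcyc_ne : ∀ p, p ≠ q → S.cycles p (insert σ K) = S.cycles p K := by
    intro p hp
    rw [cycles, cycles, chains_insert_ne (by omega)]
  by_cases hA : ∃ c ∈ S.chains q K, S.D c = S.D e
  · -- Case A : birth
    obtain ⟨c, hcK, hDc⟩ := hA
    set z := e + c with hz
    have hzσ : z σ = 1 := by
      rw [hz, Finsupp.add_apply, heσ, hσ0 c hcK, add_zero]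
    have hzD : S.D z = 0 := by
      rw [hz, map_add, hDc]
      exact two_nsmul_zero _
    have hz_cyc' : z ∈ S.cycles q (insert σ K) :=
      Submodule.mem_inf.mpr ⟨Submodule.add_mem _ he_mem'
        (S.chains_mono q (Finset.subset_insert σ K) hcK), LinearMap.mem_ker.mpr hzD⟩
    have hz_not : z ∉ S.chains q K := by
      intro h
      have := hσ0 z h
      rw [hzσ] at this
      exact one_ne_zero this
    have hbd_all : ∀ p, S.bdries p (insert σ K) = S.bdries p K := by
      intro p
      by_cases hp : p + 1 = q
      · rw [hbd_q p hp, sup_eq_left]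
        rw [Submodule.span_le, Set.singleton_subset_iff]
        exact ⟨c, by rw [hp]; exact hcK, by rw [hwdef]; exact hDc⟩
      · exact hbd_ne p hp
    have hcyc_q : S.cycles q (insert σ K) = S.cycles q K ⊔ Submodule.span (ZMod 2) {z} := by
      apply le_antisymm
      · intro x hx
        obtain ⟨hxch, hxD⟩ := Submodule.mem_inf.mp hx
        by_cases hxσ : x σ = 0
        · apply Submodule.mem_sup_left
          refine Submodule.mem_inf.mpr ⟨?_, hxD⟩
          rw [mem_chains] at hxch ⊢
          intro b hb
          obtain ⟨hbK', hbd⟩ := hxch b hb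
          rcases Finset.mem_insert.mp hbK' with rfl | h
          · exact absurd hxσ (Finsupp.mem_support_iff.mp hb)
          · exact ⟨h, hbd⟩
        · have hx1 : x σ = 1 := (zmod2_cases _).resolve_left hxσ
          have hy : x + z ∈ S.cycles q K := by
            refine Submodule.mem_inf.mpr ⟨?_, ?_⟩
            · rw [mem_chains]
              intro b hb
              have hbm : (x + z) b ≠ 0 := Finsupp.mem_support_iff.mp hb
              have hch' : x + z ∈ S.chains q (insert σ K) :=
                Submodule.add_mem _ hxch (Submodule.mem_inf.mp hz_cyc').1
              obtain ⟨hbK', hbd⟩ := S.mem_chains.mp hch' b hb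
              rcases Finset.mem_insert.mp hbK' with rfl | h
              · exfalso
                apply hbm
                rw [Finsupp.add_apply, hx1, hzσ]
                decide
              · exact ⟨h, hbd⟩
            · rw [LinearMap.mem_ker, map_add, LinearMap.mem_ker.mp hxD, hzD, add_zero]
          have hxz : x = (x + z) + z := by
            rw [add_assoc, two_nsmul_zero z, add_zero]
          rw [hxz]
          exact Submodule.add_mem _ (Submodule.mem_sup_left hy)
            (Submodule.mem_sup_right (Submodule.subset_span rfl))
      · exact sup_le (S.cycles_mono q (Finset.subset_insert σ K))
          ((Submodule.span_singleton_le_iff_mem _ _).mpr hz_cyc')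
    have hz0 : z ≠ 0 := by
      intro h
      rw [h] at hzσ
      exact one_ne_zero ((Finsupp.zero_apply).symm.trans hzσ).symm
    have hrk : ∀ p, finrank (ZMod 2) (S.Hmod p (insert σ K)) =
        (if p = q then finrank (ZMod 2) (S.Hmod p K) + 1
          else finrank (ZMod 2) (S.Hmod p K)) := by
      intro p
      have h1 := S.finrank_Hmod p K hc
      have h2 := S.finrank_Hmod p (insert σ K) hc'
      by_cases hp : p = q
      · rw [if_pos hp, hp]
        rw [hp] at h1 h2
        have hinf : S.cycles q K ⊓ Submodule.span (ZMod 2) {z} = ⊥ := by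
          rw [eq_bot_iff]
          rintro x hx
          obtain ⟨hx1, hx2⟩ := Submodule.mem_inf.mp hx
          obtain ⟨a, rfl⟩ := Submodule.mem_span_singleton.mp hx2
          rcases zmod2_cases a with rfl | rfl
          · simp
          · rw [one_smul] at hx1
            exact absurd (Submodule.mem_inf.mp hx1).1 hz_not
        have hsum := Submodule.finrank_sup_add_finrank_inf_eq
          (S.cycles q K) (Submodule.span (ZMod 2) {z})
        rw [hinf, finrank_bot, finrank_span_singleton hz0] at hsum
        rw [hcyc_q, hbd_all] at h2
        omega
      · rw [if_neg hp]
        rw [hcyc_ne p hp, hbd_all] at h2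
        omega
    refine ⟨q, Or.inl ⟨?_, hrk⟩⟩
    intro p
    rw [← LinearMap.ker_eq_bot, eq_bot_iff]
    intro x hx
    obtain ⟨y, rfl⟩ := Submodule.Quotient.mk_surjective _ x
    replace hx := LinearMap.mem_ker.mp hx
    have hx' : Submodule.Quotient.mk (Submodule.inclusion (S.cycles_mono p hsub) y)
        = (0 : S.Hmod p (insert σ K)) := hx
    replace hx' := (Submodule.Quotient.mk_eq_zero _).mp hx'
    have hy : (y : C →₀ ZMod 2) ∈ S.bdries p (insert σ K) := hx'
    rw [hbd_all] at hy
    refine (Submodule.mem_bot _).mpr ((Submodule.Quotient.mk_eq_zero _).mpr ?_)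
    exact hy
  · -- Case B : death
    have hq1 : 1 ≤ q := by
      by_contra h
      apply hA
      refine ⟨0, Submodule.zero_mem _, ?_⟩
      rw [map_zero]
      have hws : w.support = ∅ := by
        apply Finset.eq_empty_of_forall_notMem
        intro b hb
        have := (hwsupp b hb).2
        omega
      rw [← hwdef, Finsupp.support_eq_empty.mp hws]
    have hw_not : ∀ p, p + 1 = q → w ∉ S.bdries p K := by
      intro p hp hmem
      obtain ⟨cc, hccK, hDcc⟩ := Submodule.mem_map.mp hmem
      apply hA
      refine ⟨cc, by rw [← hp]; exact hccK, ?_⟩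
      rw [hDcc, hwdef]
    have hw_cyc : ∀ p, p + 1 = q → w ∈ S.cycles p K := by
      intro p hp
      refine Submodule.mem_inf.mpr ⟨?_, LinearMap.mem_ker.mpr hDw⟩
      rw [mem_chains]
      intro b hb
      obtain ⟨h1, h2⟩ := hwsupp b hb
      exact ⟨h1, by omega⟩
    have hcyc_all : ∀ p, S.cycles p (insert σ K) = S.cycles p K := by
      intro p
      by_cases hp : p = q
      · rw [hp]
        apply le_antisymm
        · intro x hx
          obtain ⟨hxch, hxD⟩ := Submodule.mem_inf.mp hx
          by_cases hxσ : x σ = 0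
          · refine Submodule.mem_inf.mpr ⟨?_, hxD⟩
            rw [mem_chains] at hxch ⊢
            intro b hb
            obtain ⟨hbK', hbd⟩ := hxch b hb
            rcases Finset.mem_insert.mp hbK' with rfl | h
            · exact absurd hxσ (Finsupp.mem_support_iff.mp hb)
            · exact ⟨h, hbd⟩
          · exfalso
            have hx1 : x σ = 1 := (zmod2_cases _).resolve_left hxσ
            apply hA
            refine ⟨x + e, ?_, ?_⟩
            · rw [mem_chains]
              intro b hb
              have hbm : (x + e) b ≠ 0 := Finsupp.mem_support_iff.mp hb
              have hch' : x + e ∈ S.chains q (insert σ K) :=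
                Submodule.add_mem _ hxch he_mem'
              obtain ⟨hbK', hbd⟩ := S.mem_chains.mp hch' b hb
              rcases Finset.mem_insert.mp hbK' with rfl | h
              · exfalso
                apply hbm
                rw [Finsupp.add_apply, hx1, heσ]
                decide
              · exact ⟨h, hbd⟩
            · rw [map_add, LinearMap.mem_ker.mp hxD, zero_add]
        · exact S.cycles_mono _ (Finset.subset_insert σ K)
      · exact hcyc_ne p hp
    have hrk : ∀ p, finrank (ZMod 2) (S.Hmod p K) =
        (if p = q - 1 then finrank (ZMod 2) (S.Hmod p (insert σ K)) + 1
          else finrank (ZMod 2) (S.Hmod p (insert σ K))) := by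
      intro p
      have h1 := S.finrank_Hmod p K hc
      have h2 := S.finrank_Hmod p (insert σ K) hc'
      by_cases hp : p + 1 = q
      · rw [if_pos (by omega)]
        have hw0 : w ≠ 0 := fun h => hw_not p hp (h ▸ Submodule.zero_mem _)
        have hinf : S.bdries p K ⊓ Submodule.span (ZMod 2) {w} = ⊥ := by
          rw [eq_bot_iff]
          rintro x hx
          obtain ⟨hx1, hx2⟩ := Submodule.mem_inf.mp hx
          obtain ⟨a, rfl⟩ := Submodule.mem_span_singleton.mp hx2
          rcases zmod2_cases a with rfl | rfl
          · simp
          · rw [one_smul] at hx1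
            exact absurd hx1 (hw_not p hp)
        have hsum := Submodule.finrank_sup_add_finrank_inf_eq
          (S.bdries p K) (Submodule.span (ZMod 2) {w})
        rw [hinf, finrank_bot, finrank_span_singleton hw0] at hsum
        rw [hcyc_all, hbd_q p hp] at h2
        omega
      · rw [if_neg (by omega)]
        rw [hcyc_all, hbd_ne p hp] at h2
        omega
    refine ⟨q - 1, Or.inr ⟨?_, hrk⟩⟩
    intro p x
    obtain ⟨y, rfl⟩ := Submodule.Quotient.mk_surjective _ x
    have hy : (y : C →₀ ZMod 2) ∈ S.cycles p K := by
      rw [← hcyc_all p]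
      exact y.2
    refine ⟨Submodule.Quotient.mk ⟨(y : C →₀ ZMod 2), hy⟩, ?_⟩
    simp only [indMap, Submodule.mapQ_apply]
    exact congrArg _ (Subtype.ext rfl)

end CellStruct
section PiLemmas

variable {k : Type} [Field k] {ι : Type} [Fintype ι]
variable {V W : ι → Type} [∀ l, AddCommGroup (V l)] [∀ l, Module k (V l)]
  [∀ l, AddCommGroup (W l)] [∀ l, Module k (W l)]

lemma range_pi_comp_proj (g : ∀ l, V l →ₗ[k] W l) :
    LinearMap.range (LinearMap.pi fun l => (g l).comp (LinearMap.proj l)) =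
      Submodule.pi Set.univ (fun l => LinearMap.range (g l)) := by
  ext x
  simp only [LinearMap.mem_range, Submodule.mem_pi, Set.mem_univ, forall_true_left]
  constructor
  · rintro ⟨y, rfl⟩ l
    exact ⟨y l, by simp [LinearMap.pi_apply]⟩
  · intro hx
    choose y hy using hx
    refine ⟨y, funext fun l => ?_⟩
    simp only [LinearMap.pi_apply, LinearMap.comp_apply, LinearMap.proj_apply]
    exact hy l

/-- The product of submodules is linearly equivalent to the product of the subtypes. -/
def subPiEquiv (p : ∀ l, Submodule k (V l)) :
    (Submodule.pi Set.univ p) ≃ₗ[k] ∀ l, (p l) where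
  toFun x := fun l => ⟨x.1 l, x.2 l (Set.mem_univ l)⟩
  map_add' x y := rfl
  map_smul' a x := rfl
  invFun f := ⟨fun l => (f l).1, fun l _ => (f l).2⟩
  left_inv x := rfl
  right_inv f := rfl

lemma finrank_submodule_pi (p : ∀ l, Submodule k (V l))
    [∀ l, FiniteDimensional k (p l)] :
    finrank k (Submodule.pi Set.univ p) = ∑ l, finrank k (p l) := by
  rw [LinearEquiv.finrank_eq (subPiEquiv p), Module.finrank_pi_fintype]

end PiLemmas

namespace ZigzagMod

variable {m : ℕ} {dir : ℕ → Bool}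

lemma barcode_fwd (M : ZigzagMod (ZMod 2) m dir) (B : Multiset (ℕ × ℕ))
    (hB : M.IsBarcode B) (i : ℕ) (hi : i < m) (h : dir i = true)
    (fd1 : FiniteDimensional (ZMod 2) (M.V i))
    (fd2 : FiniteDimensional (ZMod 2) (M.V (i + 1))) :
    Multiset.card (B.filter fun x => x.1 = i + 1)
        + finrank (ZMod 2) (LinearMap.range (M.fwd i hi h)) = finrank (ZMod 2) (M.V (i + 1)) ∧
    Multiset.card (B.filter fun x => x.2 = i)
        + finrank (ZMod 2) (LinearMap.range (M.fwd i hi h)) = finrank (ZMod 2) (M.V i) := by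
  classical
  obtain ⟨ι, fι, Ms, bdf, hint, ⟨iso⟩, hBeq⟩ := hB
  subst hBeq
  have hile : i ≤ m := hi.le
  have hi1 : i + 1 ≤ m := hi
  let ei : M.V i ≃ₗ[ZMod 2] (piSum Ms).V i := iso.e i hile
  let ei1 : M.V (i + 1) ≃ₗ[ZMod 2] (piSum Ms).V (i + 1) := iso.e (i + 1) hi1
  haveI hNi : FiniteDimensional (ZMod 2) (∀ l, (Ms l).V i) := Module.Finite.equiv ei
  haveI hNi1 : FiniteDimensional (ZMod 2) (∀ l, (Ms l).V (i + 1)) := Module.Finite.equiv ei1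
  haveI hfdi : ∀ l, FiniteDimensional (ZMod 2) ((Ms l).V i) := fun l =>
    Module.Finite.of_surjective
      (LinearMap.proj l : (∀ l', (Ms l').V i) →ₗ[ZMod 2] (Ms l).V i)
      (fun x => ⟨Pi.single l x, by simp⟩)
  haveI hfdi1 : ∀ l, FiniteDimensional (ZMod 2) ((Ms l).V (i + 1)) := fun l =>
    Module.Finite.of_surjective
      (LinearMap.proj l : (∀ l', (Ms l').V (i + 1)) →ₗ[ZMod 2] (Ms l).V (i + 1))
      (fun x => ⟨Pi.single l x, by simp⟩)
  have hdim : ∀ j, j ≤ m → ∀ l, finrank (ZMod 2) ((Ms l).V j) =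
      (if (bdf l).1 ≤ j ∧ j ≤ (bdf l).2 then 1 else 0) := by
    intro j hj l
    obtain ⟨_, _, h3, h4, _, _⟩ := hint l
    split_ifs with hcnd
    · exact h3 j hj hcnd.1 hcnd.2
    · exact h4 j hj hcnd
  have hVi : finrank (ZMod 2) (M.V i)
      = ∑ l, (if (bdf l).1 ≤ i ∧ i ≤ (bdf l).2 then 1 else 0) := by
    rw [ei.finrank_eq]
    rw [show finrank (ZMod 2) ((piSum Ms).V i) = finrank (ZMod 2) (∀ l, (Ms l).V i) from rfl]
    rw [Module.finrank_pi_fintype]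
    exact Finset.sum_congr rfl fun l _ => hdim i hile l
  have hVi1 : finrank (ZMod 2) (M.V (i + 1))
      = ∑ l, (if (bdf l).1 ≤ i + 1 ∧ i + 1 ≤ (bdf l).2 then 1 else 0) := by
    rw [ei1.finrank_eq]
    rw [show finrank (ZMod 2) ((piSum Ms).V (i + 1))
      = finrank (ZMod 2) (∀ l, (Ms l).V (i + 1)) from rfl]
    rw [Module.finrank_pi_fintype]
    exact Finset.sum_congr rfl fun l _ => hdim (i + 1) hi1 l
  have hcomm : ((piSum Ms).fwd i hi h).comp ei.toLinearMap
      = (ei1.toLinearMap).comp (M.fwd i hi h) := by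
    ext x
    exact (iso.comm_fwd i hi h x).symm
  have hNfwd : LinearMap.range ((piSum Ms).fwd i hi h)
      = Submodule.pi Set.univ (fun l => LinearMap.range ((Ms l).fwd i hi h)) :=
    range_pi_comp_proj _
  have hrank_l : ∀ l, finrank (ZMod 2) (LinearMap.range ((Ms l).fwd i hi h))
      = (if (bdf l).1 ≤ i ∧ i + 1 ≤ (bdf l).2 then 1 else 0) := by
    intro l
    obtain ⟨hb1, hb2, h3, h4, h5, _⟩ := hint l
    split_ifs with hcnd
    · have hbij := h5 i hi h hcnd.1 hcnd.2
      rw [LinearMap.range_eq_top.mpr hbij.surjective, finrank_top]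
      have ht := hdim (i + 1) hi1 l
      rw [if_pos ⟨le_trans hcnd.1 (Nat.le_succ i), hcnd.2⟩] at ht
      exact ht
    · by_cases hP : (bdf l).1 ≤ i ∧ i ≤ (bdf l).2
      · have hQ : ¬((bdf l).1 ≤ i + 1 ∧ i + 1 ≤ (bdf l).2) := by
          intro hq; exact hcnd ⟨hP.1, hq.2⟩
        have ht := hdim (i + 1) hi1 l
        rw [if_neg hQ] at ht
        have hle := Submodule.finrank_le (LinearMap.range ((Ms l).fwd i hi h))
        omega
      · have hs := hdim i hile l
        rw [if_neg hP] at hs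
        have hle := LinearMap.finrank_range_le ((Ms l).fwd i hi h)
        omega
  have hrank : finrank (ZMod 2) (LinearMap.range (M.fwd i hi h))
      = ∑ l, (if (bdf l).1 ≤ i ∧ i + 1 ≤ (bdf l).2 then 1 else 0) := by
    have h1 : LinearMap.range ((piSum Ms).fwd i hi h)
        = Submodule.map ei1.toLinearMap (LinearMap.range (M.fwd i hi h)) := by
      rw [← LinearMap.range_comp, ← hcomm, LinearMap.range_comp, LinearEquiv.range,
        Submodule.map_top]
    have h2 : finrank (ZMod 2) (LinearMap.range (M.fwd i hi h))
        = finrank (ZMod 2) (LinearMap.range ((piSum Ms).fwd i hi h)) := by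
      rw [h1, LinearEquiv.finrank_map_eq]
    haveI : ∀ l, FiniteDimensional (ZMod 2) (LinearMap.range ((Ms l).fwd i hi h)) :=
      fun l => inferInstance
    rw [h2, hNfwd]
    exact (finrank_submodule_pi (fun l => LinearMap.range ((Ms l).fwd i hi h))).trans
      (Finset.sum_congr rfl fun l _ => hrank_l l)
  have hcard : ∀ P : ℕ × ℕ → Prop, ∀ _ : DecidablePred P,
      Multiset.card ((Multiset.map bdf Finset.univ.val).filter P)
        = ∑ l, (if P (bdf l) then 1 else 0) := by
    intro P hP
    rw [Multiset.filter_map, Multiset.card_map]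
    have : Multiset.filter (P ∘ bdf) Finset.univ.val
        = (Finset.univ.filter fun l => P (bdf l)).val := by
      rw [Finset.filter_val]
      rfl
    rw [this]
    rw [show Multiset.card (Finset.univ.filter fun l => P (bdf l)).val
      = (Finset.univ.filter fun l => P (bdf l)).card from rfl]
    rw [Finset.card_filter]
  constructor
  · rw [hcard _ inferInstance, hrank, hVi1, ← Finset.sum_add_distrib]
    refine Finset.sum_congr rfl fun l _ => ?_
    obtain ⟨hb1, hb2, _, _, _, _⟩ := hint l
    split_ifs <;> omega
  · rw [hcard _ inferInstance, hrank, hVi, ← Finset.sum_add_distrib]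
    refine Finset.sum_congr rfl fun l _ => ?_
    obtain ⟨hb1, hb2, _, _, _, _⟩ := hint l
    split_ifs <;> omega

lemma barcode_bwd (M : ZigzagMod (ZMod 2) m dir) (B : Multiset (ℕ × ℕ))
    (hB : M.IsBarcode B) (i : ℕ) (hi : i < m) (h : dir i = false)
    (fd1 : FiniteDimensional (ZMod 2) (M.V i))
    (fd2 : FiniteDimensional (ZMod 2) (M.V (i + 1))) :
    Multiset.card (B.filter fun x => x.1 = i + 1)
        + finrank (ZMod 2) (LinearMap.range (M.bwd i hi h)) = finrank (ZMod 2) (M.V (i + 1)) ∧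
    Multiset.card (B.filter fun x => x.2 = i)
        + finrank (ZMod 2) (LinearMap.range (M.bwd i hi h)) = finrank (ZMod 2) (M.V i) := by
  classical
  obtain ⟨ι, fι, Ms, bdf, hint, ⟨iso⟩, hBeq⟩ := hB
  subst hBeq
  have hile : i ≤ m := hi.le
  have hi1 : i + 1 ≤ m := hi
  let ei : M.V i ≃ₗ[ZMod 2] (piSum Ms).V i := iso.e i hile
  let ei1 : M.V (i + 1) ≃ₗ[ZMod 2] (piSum Ms).V (i + 1) := iso.e (i + 1) hi1
  haveI hNi : FiniteDimensional (ZMod 2) (∀ l, (Ms l).V i) := Module.Finite.equiv ei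
  haveI hNi1 : FiniteDimensional (ZMod 2) (∀ l, (Ms l).V (i + 1)) := Module.Finite.equiv ei1
  haveI hfdi : ∀ l, FiniteDimensional (ZMod 2) ((Ms l).V i) := fun l =>
    Module.Finite.of_surjective
      (LinearMap.proj l : (∀ l', (Ms l').V i) →ₗ[ZMod 2] (Ms l).V i)
      (fun x => ⟨Pi.single l x, by simp⟩)
  haveI hfdi1 : ∀ l, FiniteDimensional (ZMod 2) ((Ms l).V (i + 1)) := fun l =>
    Module.Finite.of_surjective
      (LinearMap.proj l : (∀ l', (Ms l').V (i + 1)) →ₗ[ZMod 2] (Ms l).V (i + 1))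
      (fun x => ⟨Pi.single l x, by simp⟩)
  have hdim : ∀ j, j ≤ m → ∀ l, finrank (ZMod 2) ((Ms l).V j) =
      (if (bdf l).1 ≤ j ∧ j ≤ (bdf l).2 then 1 else 0) := by
    intro j hj l
    obtain ⟨_, _, h3, h4, _, _⟩ := hint l
    split_ifs with hcnd
    · exact h3 j hj hcnd.1 hcnd.2
    · exact h4 j hj hcnd
  have hVi : finrank (ZMod 2) (M.V i)
      = ∑ l, (if (bdf l).1 ≤ i ∧ i ≤ (bdf l).2 then 1 else 0) := by
    rw [ei.finrank_eq]
    rw [show finrank (ZMod 2) ((piSum Ms).V i) = finrank (ZMod 2) (∀ l, (Ms l).V i) from rfl]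
    rw [Module.finrank_pi_fintype]
    exact Finset.sum_congr rfl fun l _ => hdim i hile l
  have hVi1 : finrank (ZMod 2) (M.V (i + 1))
      = ∑ l, (if (bdf l).1 ≤ i + 1 ∧ i + 1 ≤ (bdf l).2 then 1 else 0) := by
    rw [ei1.finrank_eq]
    rw [show finrank (ZMod 2) ((piSum Ms).V (i + 1))
      = finrank (ZMod 2) (∀ l, (Ms l).V (i + 1)) from rfl]
    rw [Module.finrank_pi_fintype]
    exact Finset.sum_congr rfl fun l _ => hdim (i + 1) hi1 l
  have hcomm : ((piSum Ms).bwd i hi h).comp ei1.toLinearMap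
      = (ei.toLinearMap).comp (M.bwd i hi h) := by
    ext x
    exact (iso.comm_bwd i hi h x).symm
  have hNbwd : LinearMap.range ((piSum Ms).bwd i hi h)
      = Submodule.pi Set.univ (fun l => LinearMap.range ((Ms l).bwd i hi h)) :=
    range_pi_comp_proj _
  have hrank_l : ∀ l, finrank (ZMod 2) (LinearMap.range ((Ms l).bwd i hi h))
      = (if (bdf l).1 ≤ i ∧ i + 1 ≤ (bdf l).2 then 1 else 0) := by
    intro l
    obtain ⟨hb1, hb2, h3, h4, _, h6⟩ := hint l
    split_ifs with hcnd
    · have hbij := h6 i hi h hcnd.1 hcnd.2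
      rw [LinearMap.range_eq_top.mpr hbij.surjective, finrank_top]
      have ht := hdim i hile l
      rw [if_pos ⟨hcnd.1, le_trans (Nat.le_succ i) hcnd.2⟩] at ht
      exact ht
    · by_cases hP : (bdf l).1 ≤ i ∧ i ≤ (bdf l).2
      · have ht := hdim (i + 1) hi1 l
        have hQ : ¬((bdf l).1 ≤ i + 1 ∧ i + 1 ≤ (bdf l).2) := by
          intro hq; exact hcnd ⟨hP.1, hq.2⟩
        rw [if_neg hQ] at ht
        have hle := LinearMap.finrank_range_le ((Ms l).bwd i hi h)
        omega
      · have hs := hdim i hile l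
        rw [if_neg hP] at hs
        have hle := Submodule.finrank_le (LinearMap.range ((Ms l).bwd i hi h))
        omega
  have hrank : finrank (ZMod 2) (LinearMap.range (M.bwd i hi h))
      = ∑ l, (if (bdf l).1 ≤ i ∧ i + 1 ≤ (bdf l).2 then 1 else 0) := by
    have h1 : LinearMap.range ((piSum Ms).bwd i hi h)
        = Submodule.map ei.toLinearMap (LinearMap.range (M.bwd i hi h)) := by
      rw [← LinearMap.range_comp, ← hcomm, LinearMap.range_comp, LinearEquiv.range,
        Submodule.map_top]
    have h2 : finrank (ZMod 2) (LinearMap.range (M.bwd i hi h))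
        = finrank (ZMod 2) (LinearMap.range ((piSum Ms).bwd i hi h)) := by
      rw [h1, LinearEquiv.finrank_map_eq]
    haveI : ∀ l, FiniteDimensional (ZMod 2) (LinearMap.range ((Ms l).bwd i hi h)) :=
      fun l => inferInstance
    rw [h2, hNbwd]
    exact (finrank_submodule_pi (fun l => LinearMap.range ((Ms l).bwd i hi h))).trans
      (Finset.sum_congr rfl fun l _ => hrank_l l)
  have hcard : ∀ P : ℕ × ℕ → Prop, ∀ _ : DecidablePred P,
      Multiset.card ((Multiset.map bdf Finset.univ.val).filter P)
        = ∑ l, (if P (bdf l) then 1 else 0) := by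
    intro P hP
    rw [Multiset.filter_map, Multiset.card_map]
    have : Multiset.filter (P ∘ bdf) Finset.univ.val
        = (Finset.univ.filter fun l => P (bdf l)).val := by
      rw [Finset.filter_val]
      rfl
    rw [this]
    rw [show Multiset.card (Finset.univ.filter fun l => P (bdf l)).val
      = (Finset.univ.filter fun l => P (bdf l)).card from rfl]
    rw [Finset.card_filter]
  constructor
  · rw [hcard _ inferInstance, hrank, hVi1, ← Finset.sum_add_distrib]
    refine Finset.sum_congr rfl fun l _ => ?_
    obtain ⟨hb1, hb2, _, _, _, _⟩ := hint l
    split_ifs <;> omega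
  · rw [hcard _ inferInstance, hrank, hVi, ← Finset.sum_add_distrib]
    refine Finset.sum_congr rfl fun l _ => ?_
    obtain ⟨hb1, hb2, _, _, _, _⟩ := hint l
    split_ifs <;> omega

end ZigzagMod
/-- For a cell-wise zigzag filtration starting and ending with the empty
complex, each inclusion `K_i ↔ K_{i+1}` either provides `i+1` as the birth index of exactly
one interval of the barcode (and `i` as death index of none), or provides `i` as the death
index of exactly one interval (and `i+1` as birth index of none), but not both. -/
theorem birth_or_death_exclusively {C : Type} [DecidableEq C] (S : CellStruct C) (m : ℕ)
    (F : Filt C S m) (Bp : ℕ → Multiset (ℕ × ℕ)) (hB : F.IsBarcodeFam Bp)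
    (N : ℕ) (hN : ∀ p, N ≤ p → Bp p = 0) (i : ℕ) (hi : i < m) :
    (∑ p ∈ Finset.range N, Multiset.card ((Bp p).filter (fun x => x.1 = i + 1)) = 1 ∧
     ∑ p ∈ Finset.range N, Multiset.card ((Bp p).filter (fun x => x.2 = i)) = 0) ∨
    (∑ p ∈ Finset.range N, Multiset.card ((Bp p).filter (fun x => x.1 = i + 1)) = 0 ∧
     ∑ p ∈ Finset.range N, Multiset.card ((Bp p).filter (fun x => x.2 = i)) = 1) := by
  classical
  rcases F.step i hi with ⟨hdt, hσ, hins⟩ | ⟨hdt, hσ, hins⟩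
  · -- forward step : insertion of a cell
    have hdir : F.dir i = true := hdt
    obtain ⟨q0, hcase⟩ := CellStruct.insertion (S := S) hσ hins (F.complex i)
      (F.complex (i + 1)) (F.subset_of_fwd hi hdir)
    have hbar : ∀ p,
        Multiset.card ((Bp p).filter fun x => x.1 = i + 1)
            + finrank (ZMod 2) (LinearMap.range ((F.Hzz p).fwd i hi hdir))
          = finrank (ZMod 2) ((F.Hzz p).V (i + 1)) ∧
        Multiset.card ((Bp p).filter fun x => x.2 = i)
            + finrank (ZMod 2) (LinearMap.range ((F.Hzz p).fwd i hi hdir))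
          = finrank (ZMod 2) ((F.Hzz p).V i) := fun p =>
      ZigzagMod.barcode_fwd (F.Hzz p) (Bp p) (hB p) i hi hdir
        (inferInstanceAs (FiniteDimensional (ZMod 2) (S.Hmod p (F.K i))))
        (inferInstanceAs (FiniteDimensional (ZMod 2) (S.Hmod p (F.K (i + 1)))))
    have hvi : ∀ p, finrank (ZMod 2) ((F.Hzz p).V i)
        = finrank (ZMod 2) (S.Hmod p (F.K i)) := fun p => rfl
    have hvi1 : ∀ p, finrank (ZMod 2) ((F.Hzz p).V (i + 1))
        = finrank (ZMod 2) (S.Hmod p (F.K (i + 1))) := fun p => rfl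
    rcases hcase with ⟨hinj, hd⟩ | ⟨hsurj, hd⟩
    · -- birth case
      have key : ∀ p,
          (Multiset.card ((Bp p).filter fun x => x.1 = i + 1) = if p = q0 then 1 else 0)
          ∧ Multiset.card ((Bp p).filter fun x => x.2 = i) = 0 := by
        intro p
        haveI : FiniteDimensional (ZMod 2) ((F.Hzz p).V i) :=
          inferInstanceAs (FiniteDimensional (ZMod 2) (S.Hmod p (F.K i)))
        haveI : FiniteDimensional (ZMod 2) ((F.Hzz p).V (i + 1)) :=
          inferInstanceAs (FiniteDimensional (ZMod 2) (S.Hmod p (F.K (i + 1))))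
        obtain ⟨e1, e2⟩ := hbar p
        have hker : LinearMap.ker ((F.Hzz p).fwd i hi hdir) = ⊥ :=
          LinearMap.ker_eq_bot.mpr (hinj p)
        have hrn := LinearMap.finrank_range_add_finrank_ker ((F.Hzz p).fwd i hi hdir)
        rw [hker, finrank_bot, add_zero, hvi p] at hrn
        rw [hvi1 p] at e1
        rw [hvi p] at e2
        have hdp := hd p
        refine ⟨?_, by omega⟩
        by_cases hpq : p = q0
        · rw [if_pos hpq]; rw [if_pos hpq] at hdp; omega
        · rw [if_neg hpq]; rw [if_neg hpq] at hdp; omega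
      have hq0N : q0 < N := by
        by_contra hge
        have h0 : Bp q0 = 0 := hN q0 (by omega)
        have hk := (key q0).1
        rw [if_pos rfl, h0] at hk
        simp at hk
      left
      constructor
      · rw [Finset.sum_congr rfl (fun p _ => (key p).1)]
        rw [Finset.sum_ite_eq' (Finset.range N) q0 (fun _ => 1)]
        rw [if_pos (Finset.mem_range.mpr hq0N)]
      · exact Finset.sum_eq_zero fun p _ => (key p).2
    · -- death case
      have key : ∀ p,
          Multiset.card ((Bp p).filter fun x => x.1 = i + 1) = 0
          ∧ (Multiset.card ((Bp p).filter fun x => x.2 = i) = if p = q0 then 1 else 0) := by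
        intro p
        haveI : FiniteDimensional (ZMod 2) ((F.Hzz p).V i) :=
          inferInstanceAs (FiniteDimensional (ZMod 2) (S.Hmod p (F.K i)))
        haveI : FiniteDimensional (ZMod 2) ((F.Hzz p).V (i + 1)) :=
          inferInstanceAs (FiniteDimensional (ZMod 2) (S.Hmod p (F.K (i + 1))))
        obtain ⟨e1, e2⟩ := hbar p
        have hrt : finrank (ZMod 2) (LinearMap.range ((F.Hzz p).fwd i hi hdir))
            = finrank (ZMod 2) (S.Hmod p (F.K (i + 1))) := by
          have hsr : Function.Surjective ((F.Hzz p).fwd i hi hdir) := hsurj p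
          rw [LinearMap.range_eq_top.mpr hsr, finrank_top]
          exact hvi1 p
        rw [hvi1 p, hrt] at e1
        rw [hvi p, hrt] at e2
        have hdp := hd p
        refine ⟨by omega, ?_⟩
        by_cases hpq : p = q0
        · rw [if_pos hpq]; rw [if_pos hpq] at hdp; omega
        · rw [if_neg hpq]; rw [if_neg hpq] at hdp; omega
      have hq0N : q0 < N := by
        by_contra hge
        have h0 : Bp q0 = 0 := hN q0 (by omega)
        have hk := (key q0).2
        rw [if_pos rfl, h0] at hk
        simp at hk
      right
      constructor
      · exact Finset.sum_eq_zero fun p _ => (key p).1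
      · rw [Finset.sum_congr rfl (fun p _ => (key p).2)]
        rw [Finset.sum_ite_eq' (Finset.range N) q0 (fun _ => 1)]
        rw [if_pos (Finset.mem_range.mpr hq0N)]
  · -- backward step : deletion of a cell
    have hdir : F.dir i = false := hdt
    obtain ⟨q0, hcase⟩ := CellStruct.insertion (S := S) hσ hins (F.complex (i + 1))
      (F.complex i) (F.subset_of_bwd hi hdir)
    have hbar : ∀ p,
        Multiset.card ((Bp p).filter fun x => x.1 = i + 1)
            + finrank (ZMod 2) (LinearMap.range ((F.Hzz p).bwd i hi hdir))
          = finrank (ZMod 2) ((F.Hzz p).V (i + 1)) ∧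
        Multiset.card ((Bp p).filter fun x => x.2 = i)
            + finrank (ZMod 2) (LinearMap.range ((F.Hzz p).bwd i hi hdir))
          = finrank (ZMod 2) ((F.Hzz p).V i) := fun p =>
      ZigzagMod.barcode_bwd (F.Hzz p) (Bp p) (hB p) i hi hdir
        (inferInstanceAs (FiniteDimensional (ZMod 2) (S.Hmod p (F.K i))))
        (inferInstanceAs (FiniteDimensional (ZMod 2) (S.Hmod p (F.K (i + 1)))))
    have hvi : ∀ p, finrank (ZMod 2) ((F.Hzz p).V i)
        = finrank (ZMod 2) (S.Hmod p (F.K i)) := fun p => rfl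
    have hvi1 : ∀ p, finrank (ZMod 2) ((F.Hzz p).V (i + 1))
        = finrank (ZMod 2) (S.Hmod p (F.K (i + 1))) := fun p => rfl
    rcases hcase with ⟨hinj, hd⟩ | ⟨hsurj, hd⟩
    · -- interval dies entering K i backwards : death at i
      have key : ∀ p,
          Multiset.card ((Bp p).filter fun x => x.1 = i + 1) = 0
          ∧ (Multiset.card ((Bp p).filter fun x => x.2 = i) = if p = q0 then 1 else 0) := by
        intro p
        haveI : FiniteDimensional (ZMod 2) ((F.Hzz p).V i) :=
          inferInstanceAs (FiniteDimensional (ZMod 2) (S.Hmod p (F.K i)))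
        haveI : FiniteDimensional (ZMod 2) ((F.Hzz p).V (i + 1)) :=
          inferInstanceAs (FiniteDimensional (ZMod 2) (S.Hmod p (F.K (i + 1))))
        obtain ⟨e1, e2⟩ := hbar p
        have hker : LinearMap.ker ((F.Hzz p).bwd i hi hdir) = ⊥ :=
          LinearMap.ker_eq_bot.mpr (hinj p)
        have hrn := LinearMap.finrank_range_add_finrank_ker ((F.Hzz p).bwd i hi hdir)
        rw [hker, finrank_bot, add_zero, hvi1 p] at hrn
        rw [hvi1 p] at e1
        rw [hvi p] at e2
        have hdp := hd p
        refine ⟨by omega, ?_⟩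
        by_cases hpq : p = q0
        · rw [if_pos hpq]; rw [if_pos hpq] at hdp; omega
        · rw [if_neg hpq]; rw [if_neg hpq] at hdp; omega
      have hq0N : q0 < N := by
        by_contra hge
        have h0 : Bp q0 = 0 := hN q0 (by omega)
        have hk := (key q0).2
        rw [if_pos rfl, h0] at hk
        simp at hk
      right
      constructor
      · exact Finset.sum_eq_zero fun p _ => (key p).1
      · rw [Finset.sum_congr rfl (fun p _ => (key p).2)]
        rw [Finset.sum_ite_eq' (Finset.range N) q0 (fun _ => 1)]
        rw [if_pos (Finset.mem_range.mpr hq0N)]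
    · -- interval born at i+1
      have key : ∀ p,
          (Multiset.card ((Bp p).filter fun x => x.1 = i + 1) = if p = q0 then 1 else 0)
          ∧ Multiset.card ((Bp p).filter fun x => x.2 = i) = 0 := by
        intro p
        haveI : FiniteDimensional (ZMod 2) ((F.Hzz p).V i) :=
          inferInstanceAs (FiniteDimensional (ZMod 2) (S.Hmod p (F.K i)))
        haveI : FiniteDimensional (ZMod 2) ((F.Hzz p).V (i + 1)) :=
          inferInstanceAs (FiniteDimensional (ZMod 2) (S.Hmod p (F.K (i + 1))))
        obtain ⟨e1, e2⟩ := hbar p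
        have hrt : finrank (ZMod 2) (LinearMap.range ((F.Hzz p).bwd i hi hdir))
            = finrank (ZMod 2) (S.Hmod p (F.K i)) := by
          have hsr : Function.Surjective ((F.Hzz p).bwd i hi hdir) := hsurj p
          rw [LinearMap.range_eq_top.mpr hsr, finrank_top]
          exact hvi p
        rw [hvi1 p, hrt] at e1
        rw [hvi p, hrt] at e2
        have hdp := hd p
        refine ⟨?_, by omega⟩
        by_cases hpq : p = q0
        · rw [if_pos hpq]; rw [if_pos hpq] at hdp; omega
        · rw [if_neg hpq]; rw [if_neg hpq] at hdp; omega
      have hq0N : q0 < N := by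
        by_contra hge
        have h0 : Bp q0 = 0 := hN q0 (by omega)
        have hk := (key q0).1
        rw [if_pos rfl, h0] at hk
        simp at hk
      left
      constructor
      · rw [Finset.sum_congr rfl (fun p _ => (key p).1)]
        rw [Finset.sum_ite_eq' (Finset.range N) q0 (fun _ => 1)]
        rw [if_pos (Finset.mem_range.mpr hq0N)]
      · exact Finset.sum_eq_zero fun p _ => (key p).2
end

section
/- In the bijection given by the Diamond Principle between barcodes of two filtrations related by a Mayer–Vietoris diamond at index j, an interval is mapped to a different interval or a different homological dimension only if it contains some but not all of the indices {j-1, j, j+1}. -/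
/-! An interval moved by `fDiamond j` has its death index in `{j-1, j}` or its birth index in
`{j, j+1}`, and so does `[j,j]`. That endpoint lies in `{j-1, j, j+1}`, and it also keeps the
interval from containing both `j-1` and `j+1`. -/

/-- The interval mapping of the Diamond Principle at index `j`:
`[b,j-1] ↦ [b,j]`, `[b,j] ↦ [b,j-1]`, `[j,d] ↦ [j+1,d]`, `[j+1,d] ↦ [j,d]`,
and all other intervals are fixed. -/
def fDiamond (j : ℕ) (x : ℕ × ℕ) : ℕ × ℕ :=
  if x.2 = j - 1 then (x.1, j)
  else if x.2 = j then (x.1, j - 1)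
  else if x.1 = j then (j + 1, x.2)
  else if x.1 = j + 1 then (j, x.2)
  else x

lemma fDiamond_eq_self {j b d : ℕ} (hd₁ : d ≠ j - 1) (hd₂ : d ≠ j) (hb₁ : b ≠ j)
    (hb₂ : b ≠ j + 1) : fDiamond j (b, d) = (b, d) := by
  simp [fDiamond, hd₁, hd₂, hb₁, hb₂]

lemma endpoint_of_fDiamond_ne_self {j b d : ℕ} (h : fDiamond j (b, d) ≠ (b, d)) :
    d = j - 1 ∨ d = j ∨ b = j ∨ b = j + 1 := by
  by_contra! hfix
  exact h (fDiamond_eq_self hfix.1 hfix.2.1 hfix.2.2.1 hfix.2.2.2)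

/-- In the Diamond Principle bijection at index `j`, an interval `[b,d]`
is mapped to a different interval, or to the same interval in a different homological
dimension (which happens exactly for `[j,j]`), only if `[b,d]` contains some but not all
of the indices `{j-1, j, j+1}`. -/
theorem diamond_moved_intervals_straddle (j b d : ℕ) (hj : 1 ≤ j) (hbd : b ≤ d)
    (hchange : fDiamond j (b, d) ≠ (b, d) ∨ (b, d) = (j, j)) :
    (∃ x ∈ ({j - 1, j, j + 1} : Set ℕ), b ≤ x ∧ x ≤ d) ∧
    ¬(∀ x ∈ ({j - 1, j, j + 1} : Set ℕ), b ≤ x ∧ x ≤ d) := by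
  have hend : d = j - 1 ∨ d = j ∨ b = j ∨ b = j + 1 := by
    rcases hchange with hmoved | hjj
    · exact endpoint_of_fDiamond_ne_self hmoved
    · exact Or.inr (Or.inl (Prod.mk.inj hjj).2)
  simp only [Set.mem_insert_iff, Set.mem_singleton_iff]
  constructor
  · rcases hend with hd | hd | hb | hb
    · exact ⟨d, Or.inl hd, hbd, le_rfl⟩
    · exact ⟨d, Or.inr (Or.inl hd), hbd, le_rfl⟩
    · exact ⟨b, Or.inr (Or.inl hb), le_rfl, hbd⟩
    · exact ⟨b, Or.inr (Or.inr hb), le_rfl, hbd⟩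
  · intro hall
    have hlow := hall (j - 1) (Or.inl rfl)
    have hhigh := hall (j + 1) (Or.inr (Or.inr rfl))
    omega
end

section
/- Every non-repetitive cell-wise zigzag filtration ∅ = K_0 ↔ ... ↔ K_m = ∅ can be transformed into an up-down filtration ∅ = L_0 ↪ ... ↪ L_n ↩ ... ↩ L_{2n} = ∅ (with m = 2n) by a finite sequence of inward diamond switches, each of which exchanges an adjacent deletion-then-addition pair of distinct cells into an addition-then-deletion pair. -/
/-!
Count the inversions of the event word: pairs formed by a deletion and a later addition. As long
as the word is not up-down it contains a deletion immediately followed by an addition; the two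
cells differ, because each cell is added before it is deleted, so the pair can be switched, which
removes exactly one inversion and keeps the word non-repetitive. When no inversion is left the word
is up-down, and its two halves have equal length because a non-repetitive word from `∅` to `∅`
adds exactly as many cells as it deletes.
-/

/-- One inward diamond switch: an adjacent deletion-then-addition pair of distinct cells is
replaced by the corresponding addition-then-deletion pair. -/
def SwitchStep {C : Type} (w w' : List (Bool × C)) : Prop :=
  ∃ (l1 l2 : List (Bool × C)) (σ τ : C), σ ≠ τ ∧
    w = l1 ++ (false, τ) :: (true, σ) :: l2 ∧
    w' = l1 ++ (true, σ) :: (false, τ) :: l2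

/-- The event word of a non-repetitive cell-wise zigzag filtration from `∅` to `∅`:
every cell is either untouched, or added exactly once and deleted exactly once afterwards. -/
def ValidNonRep {C : Type} [DecidableEq C] (w : List (Bool × C)) : Prop :=
  ∀ σ : C, w.filter (fun e => decide (e.2 = σ)) = [] ∨
    w.filter (fun e => decide (e.2 = σ)) = [(true, σ), (false, σ)]

namespace List

def falseTrueInversions : List Bool → ℕ
  | [] => 0
  | b :: l => falseTrueInversions l + if b then 0 else l.count true

theorem falseTrueInversions_append (l l' : List Bool) :
    (l ++ l').falseTrueInversions =
      l.falseTrueInversions + l'.falseTrueInversions + l.count false * l'.count true := by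
  induction l with
  | nil => simp [falseTrueInversions]
  | cons b l ih =>
    cases b
    · simp only [cons_append, falseTrueInversions, ih, Bool.false_eq_true, ↓reduceIte,
        count_append, count_cons_self]
      ring
    · simp [falseTrueInversions, ih]

end List

open List Relation

section

variable {C : Type}

namespace SwitchStep

variable {w w' : List (Bool × C)}

theorem perm (h : SwitchStep w w') : w.Perm w' := by
  obtain ⟨l1, l2, σ, τ, -, rfl, rfl⟩ := h
  exact (Perm.swap _ _ _).append_left l1

theorem falseTrueInversions_map_fst (h : SwitchStep w w') :
    (w.map Prod.fst).falseTrueInversions = (w'.map Prod.fst).falseTrueInversions + 1 := by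
  obtain ⟨l1, l2, σ, τ, -, rfl, rfl⟩ := h
  simp only [map_append, map_cons, falseTrueInversions_append, falseTrueInversions, ↓reduceIte,
    add_zero, Bool.false_eq_true, count_cons_self, ne_eq, not_false_eq_true, count_cons_of_ne]
  ring

theorem filter_snd_eq [DecidableEq C] (h : SwitchStep w w') (ρ : C) :
    w'.filter (fun e => decide (e.2 = ρ)) = w.filter (fun e => decide (e.2 = ρ)) := by
  obtain ⟨l1, l2, σ, τ, hne, rfl, rfl⟩ := h
  by_cases hσ : σ = ρ <;> by_cases hτ : τ = ρ <;> simp [filter_append, hσ, hτ]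
  exact hne (hσ.trans hτ.symm)

theorem perm_of_reflTransGen (h : ReflTransGen SwitchStep w w') : w.Perm w' := by
  induction h with
  | refl => rfl
  | tail _ hs ih => exact ih.trans hs.perm

end SwitchStep

theorem exists_upDown_or_exists_falseTrue (w : List (Bool × C)) :
    (∃ w1 w2, w = w1 ++ w2 ∧ (∀ e ∈ w1, e.1 = true) ∧ ∀ e ∈ w2, e.1 = false) ∨
      ∃ l1 τ σ l2, w = l1 ++ (false, τ) :: (true, σ) :: l2 := by
  induction w with
  | nil => exact .inl ⟨[], [], by simp⟩
  | cons e w ih =>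
    obtain ⟨b, c⟩ := e
    rcases ih with ⟨w1, w2, rfl, h1, h2⟩ | ⟨l1, τ, σ, l2, rfl⟩
    · cases b with
      | true => exact .inl ⟨(true, c) :: w1, w2, rfl, by simpa using h1, h2⟩
      | false =>
        cases w1 with
        | nil => exact .inl ⟨[], (false, c) :: w2, rfl, by simp, by simpa using h2⟩
        | cons e w1 =>
          obtain ⟨b', σ⟩ := e
          obtain rfl : b' = true := h1 _ mem_cons_self
          exact .inr ⟨[], c, σ, w1 ++ w2, rfl⟩
    · exact .inr ⟨(b, c) :: l1, τ, σ, l2, rfl⟩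

namespace ValidNonRep

variable [DecidableEq C] {w : List (Bool × C)}

theorem of_switchStep {w' : List (Bool × C)} (h : ValidNonRep w) (hs : SwitchStep w w') :
    ValidNonRep w' := fun ρ => hs.filter_snd_eq ρ ▸ h ρ

theorem of_reflTransGen {w' : List (Bool × C)} (h : ValidNonRep w)
    (hw : ReflTransGen SwitchStep w w') : ValidNonRep w' := by
  induction hw with
  | refl => exact h
  | tail _ hs ih => exact ih.of_switchStep hs

theorem ne_of_eq_append {l1 l2 : List (Bool × C)} {σ τ : C}
    (h : ValidNonRep (l1 ++ (false, τ) :: (true, σ) :: l2)) : σ ≠ τ := by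
  rintro rfl
  rcases h σ with h | h
  · simp [filter_append] at h
  · simp only [filter_append, decide_true, filter_cons_of_pos] at h
    have hl1 : l1.filter (fun e => decide (e.2 = σ)) = [] :=
      eq_nil_of_length_eq_zero (by have := congrArg length h; simp at this; omega)
    simp [hl1] at h

theorem count_true_eq_count_false (h : ValidNonRep w) (σ : C) :
    w.count (true, σ) = w.count (false, σ) := by
  have hfilter (b : Bool) :
      w.count (b, σ) = (w.filter fun e => decide (e.2 = σ)).count (b, σ) :=
    (count_filter (by simp)).symm
  rw [hfilter, hfilter]
  rcases h σ with h | h <;> simp [h]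

theorem map_not_fst_perm (h : ValidNonRep w) : (w.map fun e => (!e.1, e.2)).Perm w := by
  have hinv : Function.Involutive fun e : Bool × C => (!e.1, e.2) := fun e => by simp
  refine perm_iff_count.mpr fun ⟨b, σ⟩ => ?_
  rw [← hinv (b, σ), count_map_of_injective _ _ hinv.injective]
  cases b <;> simp [h.count_true_eq_count_false]

theorem countP_fst_eq_countP_not_fst (h : ValidNonRep w) :
    w.countP (·.1) = w.countP (!·.1) := by
  rw [← h.map_not_fst_perm.countP_eq, countP_map]
  rfl

theorem length_eq_of_append {w1 w2 : List (Bool × C)} (h : ValidNonRep (w1 ++ w2))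
    (h1 : ∀ e ∈ w1, e.1 = true) (h2 : ∀ e ∈ w2, e.1 = false) : w1.length = w2.length := by
  have hadd : (w1 ++ w2).countP (·.1) = w1.length := by
    rw [countP_append, countP_eq_length.mpr (by simpa using h1),
      countP_eq_zero.mpr (by simpa using h2), Nat.add_zero]
  have hdel : (w1 ++ w2).countP (!·.1) = w2.length := by
    rw [countP_append, countP_eq_zero.mpr (by simpa using h1),
      countP_eq_length.mpr (by simpa using h2), Nat.zero_add]
  rw [← hadd, ← hdel, h.countP_fst_eq_countP_not_fst]

theorem exists_reflTransGen_switchStep_upDown (h : ValidNonRep w) :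
    ∃ w', ReflTransGen SwitchStep w w' ∧
      ∃ w1 w2, w' = w1 ++ w2 ∧ (∀ e ∈ w1, e.1 = true) ∧ ∀ e ∈ w2, e.1 = false := by
  induction hn : (w.map Prod.fst).falseTrueInversions using Nat.strong_induction_on
    generalizing w with
  | _ n ih =>
  rcases exists_upDown_or_exists_falseTrue w with hw | ⟨l1, τ, σ, l2, rfl⟩
  · exact ⟨w, .refl, hw⟩
  · have hs : SwitchStep (l1 ++ (false, τ) :: (true, σ) :: l2)
        (l1 ++ (true, σ) :: (false, τ) :: l2) :=
      ⟨l1, l2, σ, τ, h.ne_of_eq_append, rfl, rfl⟩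
    obtain ⟨w', hw', hud⟩ :=
      ih _ (by rw [← hn, hs.falseTrueInversions_map_fst]; omega) (h.of_switchStep hs) rfl
    exact ⟨w', .head hs hw', hud⟩

end ValidNonRep

end

/-- Every non-repetitive cell-wise zigzag filtration `∅ = K_0 ↔ ... ↔ K_m = ∅`
can be transformed by a finite sequence of inward diamond switches into an up-down filtration
`∅ = L_0 ↪ ... ↪ L_n ↩ ... ↩ L_{2n} = ∅` with `m = 2n`. -/
theorem nonrep_to_updown {C : Type} [DecidableEq C] (w : List (Bool × C))
    (h : ValidNonRep w) :
    ∃ w' w1 w2 : List (Bool × C),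
      Relation.ReflTransGen SwitchStep w w' ∧
      w' = w1 ++ w2 ∧ (∀ e ∈ w1, e.1 = true) ∧ (∀ e ∈ w2, e.1 = false) ∧
      w1.length = w2.length ∧ w.length = w1.length + w2.length := by
  obtain ⟨w', hw', w1, w2, rfl, h1, h2⟩ := h.exists_reflTransGen_switchStep_upDown
  refine ⟨_, w1, w2, hw', rfl, h1, h2, (h.of_reflTransGen hw').length_eq_of_append h1 h2, ?_⟩
  rw [(SwitchStep.perm_of_reflTransGen hw').length_eq, length_append]
end

section
/- In the Diamond Principle bijection for a Mayer–Vietoris diamond at index j, the creator and destroyer of corresponding intervals swap roles only in the case where the interval [j,j] of the upper filtration (created by the addition of σ and destroyed by the deletion of τ) maps to the interval [j,j] of the lower filtration in one dimension lower (created by the deletion of τ and destroyed by the addition of σ); in all other cases of the bijection, the creator maps to the creator and the destroyer to the destroyer. -/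
/-! Switching the two events of the diamond permutes the steps by the transposition of
`j - 1` and `j`. Away from `[j,j]`, the bijection moves the creator step `b - 1` and the
destroyer step `d` of an interval by exactly this transposition, so both keep their events. -/

theorem eq_comp_swap_of_apply_eq {α : Type*} {w w' : ℕ → α} {a b : ℕ}
    (ha : w' a = w b) (hb : w' b = w a) (hother : ∀ i, i ≠ a → i ≠ b → w' i = w i) :
    w' = w ∘ Equiv.swap a b := by
  funext i
  rw [Function.comp_apply, Equiv.swap_apply_def]
  split_ifs with hia hib
  · rwa [hia]
  · rwa [hib]
  · exact hother i hia hib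

theorem fDiamond_eq_swap {j b d : ℕ} (hb : 1 ≤ b) (hbd : b ≤ d) (hne : (b, d) ≠ (j, j)) :
    (fDiamond j (b, d)).1 - 1 = Equiv.swap (j - 1) j (b - 1) ∧
      (fDiamond j (b, d)).2 = Equiv.swap (j - 1) j d := by
  rw [Ne, Prod.mk.injEq] at hne
  simp only [fDiamond, Equiv.swap_apply_def]
  split_ifs <;> omega

theorem diamond_creator_destroyer_general {C : Type} (m j : ℕ)
    (σ τ : C) (w w' : ℕ → Bool × C)
    (h1 : w (j - 1) = (true, σ)) (h2 : w j = (false, τ))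
    (h1' : w' (j - 1) = (false, τ)) (h2' : w' j = (true, σ))
    (hother : ∀ i, i ≠ j - 1 → i ≠ j → w' i = w i) :
    (∀ b d, 1 ≤ b → b ≤ d → d < m → (b, d) ≠ (j, j) →
      w' ((fDiamond j (b, d)).1 - 1) = w (b - 1) ∧
      w' ((fDiamond j (b, d)).2) = w d) ∧
    (w' (j - 1) = w j ∧ w' j = w (j - 1)) := by
  have hswap : w' = w ∘ Equiv.swap (j - 1) j :=
    eq_comp_swap_of_apply_eq (h1'.trans h2.symm) (h2'.trans h1.symm) hother
  refine ⟨fun b d hb hbd _ hne => ?_, h1'.trans h2.symm, h2'.trans h1.symm⟩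
  obtain ⟨hcreator, hdestroyer⟩ := fDiamond_eq_swap hb hbd hne
  simp only [hswap, Function.comp_apply, hcreator, hdestroyer, Equiv.swap_apply_self, and_self]

/-- In the Diamond Principle bijection for a Mayer–Vietoris diamond at
index `j` (upper filtration with events `w` adds `σ` at step `j-1` and deletes `τ` at step
`j`; lower filtration with events `w'` deletes `τ` then adds `σ`), the creator and
destroyer of corresponding intervals swap roles only for the interval `[j,j]`; for every
other interval the creator maps to the creator and the destroyer to the destroyer. -/
theorem diamond_creator_destroyer {C : Type} (m j : ℕ) (hj : 1 ≤ j) (hjm : j < m)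
    (σ τ : C) (hστ : σ ≠ τ) (w w' : ℕ → Bool × C)
    (h1 : w (j - 1) = (true, σ)) (h2 : w j = (false, τ))
    (h1' : w' (j - 1) = (false, τ)) (h2' : w' j = (true, σ))
    (hother : ∀ i, i ≠ j - 1 → i ≠ j → w' i = w i) :
    (∀ b d, 1 ≤ b → b ≤ d → d < m → (b, d) ≠ (j, j) →
      w' ((fDiamond j (b, d)).1 - 1) = w (b - 1) ∧
      w' ((fDiamond j (b, d)).2) = w d) ∧
    (w' (j - 1) = w j ∧ w' j = w (j - 1)) :=
  diamond_creator_destroyer_general m j σ τ w w' h1 h2 h1' h2' hother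
end
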